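/- arXiv:0906.4059 — 3 statements merged into one kernel-verified Lean document; each statement's English description precedes it below -/
import Mathlib

section
/- Let (X,𝒜,μ) be a σ-finite measure space, T:X→X a measure-preserving map, 𝒱 an exhaustive family satisfying (A1), and F∈L^∞(μ) such that the average Avg(F) exists. Then for every time t∈ℕ, the average Avg(F∘T^t) exists and Avg(F∘T^t)=Avg(F). -/
noncomputable section

open MeasureTheory Filter Topology

variable {X : Type*}

/-- A family of finite-measure measurable sets is *exhaustive* if it contains an
increasing sequence whose union is the whole space. -/
def Exhaustive [MeasurableSpace X] (μ : Measure X) (𝒱 : Set (Set X)) : Prop :=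
  (∀ A ∈ 𝒱, MeasurableSet A ∧ μ A < ⊤) ∧
    ∃ W : ℕ → Set X, (∀ n, W n ∈ 𝒱) ∧ Monotone W ∧ (⋃ n, W n) = Set.univ

/-- The (μ-uniform) infinite-volume limit of a set function `φ` along the family `𝒱`
equals `L`. -/
def IVLim [MeasurableSpace X] (μ : Measure X) (𝒱 : Set (Set X)) (φ : Set X → ℝ) (L : ℝ) :
    Prop :=
  ∀ ε > 0, ∃ M : ℝ, 0 < M ∧ ∀ V ∈ 𝒱, M ≤ (μ V).toReal → |φ V - L| < ε

/-- The normalized average `μ_V(F) = (1/μ(V)) ∫_V F dμ` of `F` over a set `V`. -/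
def avgOn [MeasurableSpace X] (μ : Measure X) (F : X → ℝ) (V : Set X) : ℝ :=
  (∫ x in V, F x ∂μ) / (μ V).toReal

/-- `F` possesses the infinite-volume average `L` along the family `𝒱`. -/
def HasAvg [MeasurableSpace X] (μ : Measure X) (𝒱 : Set (Set X)) (F : X → ℝ) (L : ℝ) :
    Prop :=
  IVLim μ 𝒱 (avgOn μ F) L

/-- Assumption (A1): for each fixed time `t`, `μ(T^{-t} V Δ V) = o(μ(V))` in the
infinite-volume limit. -/
def A1 [MeasurableSpace X] (μ : Measure X) (T : X → X) (𝒱 : Set (Set X)) : Prop :=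
  ∀ t : ℕ, IVLim μ 𝒱 (fun V => (μ (symmDiff (T^[t] ⁻¹' V) V)).toReal / (μ V).toReal) 0

/-! Since `T^t` preserves `μ`, `∫_{T^{-t}V} F ∘ T^t = ∫_V F`; hence `μ_V(F ∘ T^t)` and `μ_V(F)`
differ by at most `C μ(T^{-t}V Δ V) / μ(V)`, which tends to zero by (A1). Infinite-volume limits
are handled as limits along the filter `infiniteVolume μ 𝒱` on sets. -/

open scoped symmDiff

section SetIntegral

variable [MeasurableSpace X] {μ : Measure X}
  {E : Type*} [NormedAddCommGroup E] [NormedSpace ℝ E]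

theorem norm_setIntegral_sub_setIntegral_le {f : X → E} {C : ℝ}
    (hf : AEStronglyMeasurable f μ) (hC : ∀ x, ‖f x‖ ≤ C) {s t : Set X}
    (hs : MeasurableSet s) (ht : MeasurableSet t) (hμs : μ s ≠ ⊤) (hμt : μ t ≠ ⊤) :
    ‖∫ x in s, f x ∂μ - ∫ x in t, f x ∂μ‖ ≤ C * μ.real (s ∆ t) := by
  have hint : ∀ u, μ u ≠ ⊤ → IntegrableOn f u μ := fun u hu =>
    .of_bound hu.lt_top hf.restrict C (.of_forall hC)
  have hnorm : ∀ u ⊆ s ∪ t, ‖∫ x in u, f x ∂μ‖ ≤ C * μ.real u := fun u hu =>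
    norm_setIntegral_le_of_norm_le_const
      ((measure_mono hu).trans_lt (measure_union_lt_top hμs.lt_top hμt.lt_top))
      fun x _ => hC x
  rw [← integral_inter_add_sdiff ht (hint s hμs), ← integral_inter_add_sdiff hs (hint t hμt),
    Set.inter_comm t s, add_sub_add_left_eq_sub, measureReal_symmDiff_eq hs ht hμs hμt, mul_add]
  calc _ ≤ ‖∫ x in s \ t, f x ∂μ‖ + ‖∫ x in t \ s, f x ∂μ‖ := norm_sub_le _ _
    _ ≤ _ := add_le_add (hnorm _ (Set.sdiff_subset.trans Set.subset_union_left))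
      (hnorm _ (Set.sdiff_subset.trans Set.subset_union_right))

theorem MeasureTheory.MeasurePreserving.setIntegral_preimage {Y : Type*} [MeasurableSpace Y]
    {ν : Measure Y} {f : X → Y} (hf : MeasurePreserving f μ ν) {g : Y → E}
    (hg : AEStronglyMeasurable g ν)
    {s : Set Y} (hs : MeasurableSet s) :
    ∫ x in f ⁻¹' s, g (f x) ∂μ = ∫ y in s, g y ∂ν := by
  rw [← setIntegral_map hs (hf.map_eq ▸ hg) hf.measurable.aemeasurable, hf.map_eq]

end SetIntegral

section InfiniteVolume

variable [MeasurableSpace X] {μ : Measure X}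

theorem abs_avgOn_comp_sub_avgOn_le {f : X → X} (hf : MeasurePreserving f μ μ) {F : X → ℝ}
    (hF : AEStronglyMeasurable F μ) {C : ℝ} (hC : ∀ x, |F x| ≤ C) {V : Set X} (hV : MeasurableSet V)
    (hμV : μ V ≠ ⊤) :
    |avgOn μ (fun x => F (f x)) V - avgOn μ F V| ≤ C * (μ.real ((f ⁻¹' V) ∆ V) / μ.real V) := by
  have hpre : μ (f ⁻¹' V) ≠ ⊤ := by rwa [hf.measure_preimage hV.nullMeasurableSet]
  have hshift := norm_setIntegral_sub_setIntegral_le (f := fun x => F (f x))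
    (hF.comp_measurePreserving hf) (fun x => (Real.norm_eq_abs _).trans_le (hC (f x)))
    (hf.measurable hV) hV hpre hμV
  rw [hf.setIntegral_preimage hF hV, norm_sub_rev] at hshift
  rw [avgOn, avgOn, ← sub_div, abs_div, abs_of_nonneg ENNReal.toReal_nonneg, ← mul_div_assoc]
  exact div_le_div_of_nonneg_right hshift measureReal_nonneg

def infiniteVolume (μ : Measure X) (𝒱 : Set (Set X)) : Filter (Set X) :=
  comap μ.real atTop ⊓ 𝓟 𝒱

theorem hasBasis_infiniteVolume (𝒱 : Set (Set X)) :
    (infiniteVolume μ 𝒱).HasBasis (1 ≤ ·) fun M => {V | M ≤ μ.real V} ∩ 𝒱 :=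
  ((atTop_basis' 1).comap μ.real).inf_principal 𝒱

theorem ivLim_iff_tendsto {𝒱 : Set (Set X)} {φ : Set X → ℝ} {L : ℝ} :
    IVLim μ 𝒱 φ L ↔ Tendsto φ (infiniteVolume μ 𝒱) (𝓝 L) := by
  rw [(hasBasis_infiniteVolume 𝒱).tendsto_iff Metric.nhds_basis_ball]
  simp only [IVLim, Set.mem_inter_iff, Set.mem_ofPred_eq, Metric.mem_ball, Real.dist_eq, and_imp]
  refine forall₂_congr fun ε _ => ⟨?_, ?_⟩
  · rintro ⟨M, -, hM⟩
    exact ⟨max 1 M, le_max_left _ _, fun V hV h𝒱 => hM V h𝒱 ((le_max_right _ _).trans hV)⟩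
  · rintro ⟨M, hM₁, hM⟩
    exact ⟨M, one_pos.trans_le hM₁, fun V h𝒱 hV => hM V hV h𝒱⟩

theorem eventually_mem_infiniteVolume (𝒱 : Set (Set X)) :
    ∀ᶠ V in infiniteVolume μ 𝒱, V ∈ 𝒱 :=
  mem_inf_of_right (mem_principal_self 𝒱)

end InfiniteVolume

theorem avg_invariant_general [MeasurableSpace X] (μ : Measure X)
    (T : X → X) (hT : MeasurePreserving T μ μ)
    (𝒱 : Set (Set X)) (hex : Exhaustive μ 𝒱) (hA1 : A1 μ T 𝒱)
    (F : X → ℝ) (hFmeas : Measurable F) (C : ℝ) (hFbdd : ∀ x, |F x| ≤ C)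
    (A : ℝ) (hF : HasAvg μ 𝒱 F A) (t : ℕ) :
    HasAvg μ 𝒱 (fun x => F (T^[t] x)) A := by
  rw [HasAvg, ivLim_iff_tendsto] at hF ⊢
  have hclose : ∀ᶠ V in infiniteVolume μ 𝒱,
      ‖avgOn μ (fun x => F (T^[t] x)) V - avgOn μ F V‖
        ≤ C * (μ.real ((T^[t] ⁻¹' V) ∆ V) / μ.real V) :=
    (eventually_mem_infiniteVolume 𝒱).mono fun V hV =>
      abs_avgOn_comp_sub_avgOn_le (hT.iterate t) hFmeas.aestronglyMeasurable hFbdd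
        (hex.1 V hV).1 (hex.1 V hV).2.ne
  have hsmall := (ivLim_iff_tendsto.1 (hA1 t)).const_mul C
  rw [mul_zero] at hsmall
  simpa using (squeeze_zero_norm' hclose hsmall).add hF

/-- Lemma 2.7 (invariance of the average): if `F ∈ L^∞(μ)` has average `A`, then for
every `t ∈ ℕ` the average of `F ∘ T^t` exists and equals `A`. -/
theorem avg_invariant [MeasurableSpace X] (μ : Measure X) [SigmaFinite μ]
    (T : X → X) (hT : MeasurePreserving T μ μ)
    (𝒱 : Set (Set X)) (hex : Exhaustive μ 𝒱) (hA1 : A1 μ T 𝒱)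
    (F : X → ℝ) (hFmeas : Measurable F) (C : ℝ) (hFbdd : ∀ x, |F x| ≤ C)
    (A : ℝ) (hF : HasAvg μ 𝒱 F A) (t : ℕ) :
    HasAvg μ 𝒱 (fun x => F (T^[t] x)) A :=
  avg_invariant_general μ T hT 𝒱 hex hA1 F hFmeas C hFbdd A hF t
end
end

section
/- Let (X,𝒜,μ) be a σ-finite measure space, T:X→X measure-preserving, 𝒱 an exhaustive family satisfying (A1), 𝔊⊆L^∞(μ) a class of functions each possessing an average Avg(F), and 𝔏⊆L¹(μ). Suppose that every G∈𝔊 can be written μ-almost everywhere as G(x)=Σ_{j∈ℕ} g_j(x) with g_j∈𝔏, and for every V∈𝒱 there exists a finite subset J_V⊆ℕ such that ∫_X |G·1_V − Σ_{j∈J_V} g_j| dμ = o(μ(V)) and Σ_{j∈J_V} ‖g_j‖_{L¹} = O(μ(V)) as μ(V)→∞ along 𝒱. Then (M5) implies (M2). -/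
/-!
On a window `V`, replace `1_V G` by the finite sum `S_V = ∑_{j ∈ J_V} g_j` of local observables.
Since `‖1_V G - S_V‖₁ = o(μ V)` and `F ∘ T^t` is bounded, this changes `∫ (F ∘ T^t) 1_V G` and
`Avg F ∫ 1_V G` by `o(μ V)`. For `S_V` itself, (M5) applied to each `g_j` gives an error at most
`η ∑_{j ∈ J_V} ‖g_j‖₁ = O(η μ V)` once `t` is large, uniformly in `V`. Dividing by `μ V`, what is
left is `Avg F (μ_V(G) - Avg G)`, which tends to `0` in the infinite-volume limit.
-/

noncomputable section

open MeasureTheory Filter Topology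

variable {X : Type*}

/-- Global-global mixing (M2). -/
def MixM2 [MeasurableSpace X] (μ : Measure X) (T : X → X) (𝒱 : Set (Set X))
    (𝔊 : Set (X → ℝ)) (Avg : (X → ℝ) → ℝ) : Prop :=
  ∀ F ∈ 𝔊, ∀ G ∈ 𝔊, ∀ ε > 0, ∃ M : ℝ, 0 < M ∧
    ∀ t : ℕ, M ≤ (t : ℝ) → ∀ V ∈ 𝒱, M ≤ (μ V).toReal →
      |avgOn μ (fun x => F (T^[t] x) * G x) V - Avg F * Avg G| < ε

/-- Global-local mixing (M5). -/
def MixM5 [MeasurableSpace X] (μ : Measure X) (T : X → X) (𝔊 𝔏 : Set (X → ℝ))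
    (Avg : (X → ℝ) → ℝ) : Prop :=
  ∀ F ∈ 𝔊, ∀ ε > 0, ∃ N : ℕ, ∀ t ≥ N, ∀ g ∈ 𝔏, (∫ x, |g x| ∂μ) ≠ 0 →
    |(∫ x, F (T^[t] x) * g x ∂μ) - Avg F * ∫ x, g x ∂μ| / (∫ x, |g x| ∂μ) < ε

namespace MeasureTheory

variable [MeasurableSpace X] {μ : Measure X}

theorem abs_integral_mul_sub_le_of_div_lt {φ g : X → ℝ} {a δ : ℝ} (hg : Integrable g μ)
    (h : (∫ x, |g x| ∂μ) ≠ 0 →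
      |(∫ x, φ x * g x ∂μ) - a * ∫ x, g x ∂μ| / (∫ x, |g x| ∂μ) < δ) :
    |(∫ x, φ x * g x ∂μ) - a * ∫ x, g x ∂μ| ≤ δ * ∫ x, |g x| ∂μ := by
  rcases eq_or_ne (∫ x, |g x| ∂μ) 0 with h0 | h0
  · have hg0 : g =ᵐ[μ] 0 := by
      filter_upwards [(integral_eq_zero_iff_of_nonneg (fun x => abs_nonneg (g x)) hg.abs).mp h0]
        with x hx using abs_eq_zero.mp hx
    have hφg0 : (fun x => φ x * g x) =ᵐ[μ] 0 := by
      filter_upwards [hg0] with x hx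
      simp [hx]
    simp [integral_congr_ae hφg0, integral_congr_ae hg0, h0]
  · have hpos : 0 < ∫ x, |g x| ∂μ := (integral_nonneg fun x => abs_nonneg (g x)).lt_of_ne' h0
    exact ((div_lt_iff₀ hpos).mp (h h0)).le

theorem abs_integral_mul_sum_sub_le {ι : Type*} {φ : X → ℝ} {C : ℝ}
    (hφ : AEStronglyMeasurable φ μ) (hφC : ∀ x, |φ x| ≤ C) {g : ι → X → ℝ} {s : Finset ι}
    (hg : ∀ i ∈ s, Integrable (g i) μ) {a δ : ℝ}
    (h : ∀ i ∈ s, |(∫ x, φ x * g i x ∂μ) - a * ∫ x, g i x ∂μ| ≤ δ * ∫ x, |g i x| ∂μ) :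
    |(∫ x, φ x * ∑ i ∈ s, g i x ∂μ) - a * ∫ x, ∑ i ∈ s, g i x ∂μ|
      ≤ δ * ∑ i ∈ s, ∫ x, |g i x| ∂μ := by
  have hφg : ∀ i ∈ s, Integrable (fun x => φ x * g i x) μ := fun i hi =>
    (hg i hi).bdd_mul hφ (ae_of_all _ hφC)
  simp_rw [Finset.mul_sum]
  rw [integral_finsetSum _ hφg, integral_finsetSum _ hg, Finset.mul_sum,
    ← Finset.sum_sub_distrib]
  exact (Finset.abs_sum_le_sum_abs _ _).trans (Finset.sum_le_sum h)

theorem abs_integral_mul_sub_le_of_approx {φ H S : X → ℝ} {C : ℝ}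
    (hφ : AEStronglyMeasurable φ μ) (hφC : ∀ x, |φ x| ≤ C) (hH : Integrable H μ)
    (hS : Integrable S μ) (a : ℝ) :
    |(∫ x, φ x * H x ∂μ) - a * ∫ x, H x ∂μ|
      ≤ |(∫ x, φ x * S x ∂μ) - a * ∫ x, S x ∂μ| + (C + |a|) * ∫ x, |H x - S x| ∂μ := by
  have hφf : ∀ f : X → ℝ, Integrable f μ → Integrable (fun x => φ x * f x) μ := fun f hf =>
    hf.bdd_mul hφ (ae_of_all _ hφC)
  have hsplit : (∫ x, φ x * H x ∂μ) - a * ∫ x, H x ∂μ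
      = ((∫ x, φ x * S x ∂μ) - a * ∫ x, S x ∂μ)
        + (∫ x, φ x * (H x - S x) ∂μ) - a * ∫ x, H x - S x ∂μ := by
    simp_rw [mul_sub]
    rw [integral_sub (hφf H hH) (hφf S hS), integral_sub hH hS]
    ring
  have hφdiff : |∫ x, φ x * (H x - S x) ∂μ| ≤ C * ∫ x, |H x - S x| ∂μ :=
    calc |∫ x, φ x * (H x - S x) ∂μ| ≤ ∫ x, |φ x * (H x - S x)| ∂μ :=
          abs_integral_le_integral_abs
      _ ≤ ∫ x, C * |H x - S x| ∂μ :=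
          integral_mono (hφf _ (hH.sub hS)).abs ((hH.sub hS).abs.const_mul C) fun x => by
            rw [abs_mul]
            exact mul_le_mul_of_nonneg_right (hφC x) (abs_nonneg _)
      _ = C * ∫ x, |H x - S x| ∂μ := integral_const_mul C _
  have hadiff : |a * ∫ x, H x - S x ∂μ| ≤ |a| * ∫ x, |H x - S x| ∂μ := by
    rw [abs_mul]
    exact mul_le_mul_of_nonneg_left abs_integral_le_integral_abs (abs_nonneg a)
  rw [hsplit, sub_eq_add_neg]
  refine (abs_add_three _ _ _).trans ?_
  rw [abs_neg]
  linarith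

theorem abs_avgOn_mul_sub_le {φ G : X → ℝ} {V : Set X} (hV : MeasurableSet V) (a b : ℝ) :
    |avgOn μ (fun x => φ x * G x) V - a * b|
      ≤ |(∫ x, φ x * V.indicator G x ∂μ) - a * ∫ x, V.indicator G x ∂μ| / (μ V).toReal
        + |a| * |avgOn μ G V - b| := by
  have hφG : avgOn μ (fun x => φ x * G x) V = (∫ x, φ x * V.indicator G x ∂μ) / (μ V).toReal := by
    rw [avgOn, ← integral_indicator hV]
    simp_rw [Set.indicator_mul_right]
  have hG : avgOn μ G V = (∫ x, V.indicator G x ∂μ) / (μ V).toReal := by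
    rw [avgOn, integral_indicator hV]
  rw [hφG, hG]
  set m := (μ V).toReal
  calc |(∫ x, φ x * V.indicator G x ∂μ) / m - a * b|
      = |((∫ x, φ x * V.indicator G x ∂μ) - a * ∫ x, V.indicator G x ∂μ) / m
          + a * ((∫ x, V.indicator G x ∂μ) / m - b)| := by ring_nf
    _ ≤ _ := by
      grw [abs_add_le, abs_div, abs_of_nonneg ENNReal.toReal_nonneg, abs_mul]

theorem abs_avgOn_mul_sub_le_of_approx {φ G S : X → ℝ} {V : Set X} {C : ℝ}
    (hV : MeasurableSet V) (hφ : AEStronglyMeasurable φ μ) (hφC : ∀ x, |φ x| ≤ C)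
    (hG : IntegrableOn G V μ) (hS : Integrable S μ) (a b : ℝ) :
    |avgOn μ (fun x => φ x * G x) V - a * b|
      ≤ |(∫ x, φ x * S x ∂μ) - a * ∫ x, S x ∂μ| / (μ V).toReal
        + (C + |a|) * ((∫ x, |V.indicator G x - S x| ∂μ) / (μ V).toReal)
        + |a| * |avgOn μ G V - b| := by
  grw [abs_avgOn_mul_sub_le hV a b,
    abs_integral_mul_sub_le_of_approx hφ hφC (hG.integrable_indicator hV) hS a]
  rw [add_div, mul_div_assoc]

theorem abs_avgOn_mul_sub_le_of_finsetSum {ι : Type*} {φ G : X → ℝ} {g : ι → X → ℝ}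
    {s : Finset ι} {V : Set X} {C δ K : ℝ} (hV : MeasurableSet V) (hm : 0 < (μ V).toReal)
    (hφ : AEStronglyMeasurable φ μ) (hφC : ∀ x, |φ x| ≤ C) (hG : IntegrableOn G V μ)
    (hg : ∀ i ∈ s, Integrable (g i) μ) (hδ : 0 ≤ δ) {a : ℝ}
    (hmix : ∀ i ∈ s, |(∫ x, φ x * g i x ∂μ) - a * ∫ x, g i x ∂μ| ≤ δ * ∫ x, |g i x| ∂μ)
    (hK : ∑ i ∈ s, ∫ x, |g i x| ∂μ ≤ K * (μ V).toReal) (b : ℝ) :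
    |avgOn μ (fun x => φ x * G x) V - a * b|
      ≤ δ * K + (C + |a|) * ((∫ x, |V.indicator G x - ∑ i ∈ s, g i x| ∂μ) / (μ V).toReal)
        + |a| * |avgOn μ G V - b| := by
  grw [abs_avgOn_mul_sub_le_of_approx hV hφ hφC hG (integrable_finsetSum _ hg) a b,
    abs_integral_mul_sum_sub_le hφ hφC hg hmix, hK, ← mul_assoc, mul_div_cancel_right₀ _ hm.ne']

end MeasureTheory

theorem MixM5.exists_forall_abs_integral_sub_le [MeasurableSpace X]
    {μ : Measure X} {T : X → X} {𝔊 𝔏 : Set (X → ℝ)} {Avg : (X → ℝ) → ℝ}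
    (hM5 : MixM5 μ T 𝔊 𝔏 Avg) (h𝔏 : ∀ g ∈ 𝔏, Integrable g μ) {F : X → ℝ} (hF : F ∈ 𝔊)
    {η : ℝ} (hη : 0 < η) :
    ∃ N : ℕ, ∀ t ≥ N, ∀ g ∈ 𝔏,
      |(∫ x, F (T^[t] x) * g x ∂μ) - Avg F * ∫ x, g x ∂μ| ≤ η * ∫ x, |g x| ∂μ := by
  obtain ⟨N, hN⟩ := hM5 F hF η hη
  exact ⟨N, fun t ht g hg => abs_integral_mul_sub_le_of_div_lt (h𝔏 g hg) (hN t ht g hg)⟩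

theorem m5_implies_m2_general [MeasurableSpace X] (μ : Measure X)
    (T : X → X) (hT : MeasurePreserving T μ μ)
    (𝒱 : Set (Set X)) (hex : Exhaustive μ 𝒱)
    (𝔊 𝔏 : Set (X → ℝ))
    (h𝔊 : ∀ F ∈ 𝔊, Measurable F ∧ ∃ C, ∀ x, |F x| ≤ C)
    (h𝔏 : ∀ g ∈ 𝔏, Integrable g μ)
    (Avg : (X → ℝ) → ℝ) (hAvg : ∀ F ∈ 𝔊, HasAvg μ 𝒱 F (Avg F))
    (hdecomp : ∀ G ∈ 𝔊, ∃ g : ℕ → X → ℝ, (∀ j, g j ∈ 𝔏) ∧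
      (∀ᵐ x ∂μ, HasSum (fun j => g j x) (G x)) ∧
      ∃ J : Set X → Finset ℕ,
        IVLim μ 𝒱
          (fun V => (∫ x, |Set.indicator V G x - ∑ j ∈ J V, g j x| ∂μ) / (μ V).toReal) 0 ∧
        ∃ K M : ℝ, ∀ V ∈ 𝒱, M ≤ (μ V).toReal →
          (∑ j ∈ J V, ∫ x, |g j x| ∂μ) ≤ K * (μ V).toReal)
    (hM5 : MixM5 μ T 𝔊 𝔏 Avg) :
    MixM2 μ T 𝒱 𝔊 Avg := by
  intro F hF G hG ε hε
  obtain ⟨hFm, C, hC⟩ := h𝔊 F hF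
  obtain ⟨hGm, C', hC'⟩ := h𝔊 G hG
  obtain ⟨g, hg𝔏, -, J, hJ, K, MK, hK⟩ := hdecomp G hG
  set η := ε / (|C| + 2 * |Avg F| + |K| + 1) with hη_def
  have hη : 0 < η := by positivity
  obtain ⟨N, hN⟩ := hM5.exists_forall_abs_integral_sub_le h𝔏 hF hη
  obtain ⟨M₁, hM₁, hJη⟩ := hJ η hη
  obtain ⟨M₂, -, hGη⟩ := hAvg G hG η hη
  refine ⟨max (max M₁ M₂) (max MK N), lt_max_of_lt_left (lt_max_of_lt_left hM₁),
    fun t ht V hV hVM => ?_⟩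
  simp only [max_le_iff] at ht hVM
  obtain ⟨⟨hM₁V, hM₂V⟩, hMKV, -⟩ := hVM
  obtain ⟨hVmeas, hVfin⟩ := hex.1 V hV
  have hm : 0 < (μ V).toReal := hM₁.trans_le hM₁V
  have hφ : AEStronglyMeasurable (fun x => F (T^[t] x)) μ :=
    (hFm.comp (hT.measurable.iterate t)).aestronglyMeasurable
  have hφC : ∀ x, |F (T^[t] x)| ≤ |C| := fun x => (hC _).trans (le_abs_self C)
  have hGV : IntegrableOn G V μ :=
    Measure.integrableOn_of_bounded hVfin.ne hGm.aestronglyMeasurable (ae_of_all _ hC')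
  have happrox : (∫ x, |V.indicator G x - ∑ j ∈ J V, g j x| ∂μ) / (μ V).toReal < η :=
    (le_abs_self _).trans_lt (by simpa using hJη V hV hM₁V)
  calc _ ≤ η * K + (|C| + |Avg F|) * ((∫ x, |V.indicator G x - ∑ j ∈ J V, g j x| ∂μ) / (μ V).toReal)
        + |Avg F| * |avgOn μ G V - Avg G| :=
        abs_avgOn_mul_sub_le_of_finsetSum hVmeas hm hφ hφC hGV (fun j _ => h𝔏 _ (hg𝔏 j)) hη.le
          (fun j _ => hN t (Nat.cast_le.mp ht.2.2) (g j) (hg𝔏 j)) (hK V hV hMKV) (Avg G)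
    _ < η * (|C| + 2 * |Avg F| + |K| + 1) := by
        grw [happrox.le, (hGη V hV hM₂V).le]
        nlinarith [le_abs_self K]
    _ = ε := by
        rw [hη_def]
        field_simp

/-- Proposition 3.4: if every global observable decomposes, compatibly with the
infinite-volume limit, into local observables, then (M5) ⟹ (M2). -/
theorem m5_implies_m2 [MeasurableSpace X] (μ : Measure X) [SigmaFinite μ]
    (T : X → X) (hT : MeasurePreserving T μ μ)
    (𝒱 : Set (Set X)) (hex : Exhaustive μ 𝒱) (hA1 : A1 μ T 𝒱)
    (𝔊 𝔏 : Set (X → ℝ))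
    (h𝔊 : ∀ F ∈ 𝔊, Measurable F ∧ ∃ C, ∀ x, |F x| ≤ C)
    (h𝔏 : ∀ g ∈ 𝔏, Integrable g μ)
    (Avg : (X → ℝ) → ℝ) (hAvg : ∀ F ∈ 𝔊, HasAvg μ 𝒱 F (Avg F))
    (hdecomp : ∀ G ∈ 𝔊, ∃ g : ℕ → X → ℝ, (∀ j, g j ∈ 𝔏) ∧
      (∀ᵐ x ∂μ, HasSum (fun j => g j x) (G x)) ∧
      ∃ J : Set X → Finset ℕ,
        IVLim μ 𝒱
          (fun V => (∫ x, |Set.indicator V G x - ∑ j ∈ J V, g j x| ∂μ) / (μ V).toReal) 0 ∧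
        ∃ K M : ℝ, ∀ V ∈ 𝒱, M ≤ (μ V).toReal →
          (∑ j ∈ J V, ∫ x, |g j x| ∂μ) ≤ K * (μ V).toReal)
    (hM5 : MixM5 μ T 𝔊 𝔏 Avg) :
    MixM2 μ T 𝒱 𝔊 Avg :=
  m5_implies_m2_general μ T hT 𝒱 hex 𝔊 𝔏 h𝔊 h𝔏 Avg hAvg hdecomp hM5
end
end

section
/- Let {p_β}_{β∈ℤ^d} be a probability distribution with finite second moment, such that the subgroup of ℤ^d generated by {β−β' : p_β>0, p_{β'}>0} is all of ℤ^d, and fix ε∈(0,1). Then there exists κ>0 such that, for all sufficiently large n, max over θ∈𝕋^d with |θ|≥n^{−(1−ε)/2} of |p̃(θ)|ⁿ is at most e^{−κ n^ε}. Here |θ| denotes the distance of θ from 0 in 𝕋^d and p̃(θ)=Σ_β p_β e^{iβ·θ}. -/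
/-!
Let `D(θ) = 1 - ‖p̃(θ)‖`. Writing `p̃(θ) = ‖p̃(θ)‖ w` with `‖w‖ = 1` gives
`2 D(θ) = Σ_β p_β ‖e^{iβ·θ} - w‖²`, so for `β, β'` in the support of `p`,
`D(θ) ≥ c ‖e^{i(β-β')·θ} - 1‖²`. Since `γ ↦ ‖e^{iγ·θ} - 1‖` is a group seminorm on `ℤ^d`, the
`γ` satisfying such a bound uniformly in `θ` form a subgroup; by the spanning hypothesis it
contains the unit vectors, and Jordan's inequality `‖e^{ix} - 1‖ ≥ 2|x|/π` on `[-π, π]` gives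
`D(θ) ≥ C |θ|²`. Hence `‖p̃(θ)‖ⁿ ≤ e^{-C n |θ|²} ≤ e^{-C nᵉ}` once `|θ| ≥ n^{-(1-ε)/2}`.
-/

noncomputable section

open Filter Topology

/-- The Fourier transform `ã(θ) = Σ_{β ∈ ℤ^d} a_β e^{i β·θ}` of a (summable) function
on `ℤ^d`, viewed as a `2π`-periodic function on `ℝ^d`. -/
def ftrans {d : ℕ} (a : (Fin d → ℤ) → ℝ) (θ : Fin d → ℝ) : ℂ :=
  ∑' β : Fin d → ℤ,
    (a β : ℂ) * Complex.exp (Complex.I * ((∑ i, (β i : ℝ) * θ i : ℝ) : ℂ))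

open Complex ComplexConjugate

namespace AddChar

variable {G : Type*} [AddGroup G]

def normSubOneSeminorm (ψ : AddChar G ℂ) (hψ : ∀ γ, ‖ψ γ‖ = 1) : AddGroupSeminorm G where
  toFun γ := ‖ψ γ - 1‖
  map_zero' := by simp
  add_le' a b :=
    calc ‖ψ (a + b) - 1‖ = ‖ψ a * (ψ b - 1) + (ψ a - 1)‖ := by rw [map_add_eq_mul]; ring_nf
      _ ≤ ‖ψ a * (ψ b - 1)‖ + ‖ψ a - 1‖ := norm_add_le _ _
      _ = ‖ψ a - 1‖ + ‖ψ b - 1‖ := by rw [norm_mul, hψ, one_mul, add_comm]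
  neg' a := by
    have h : ψ (-a) - 1 = -(ψ (-a) * (ψ a - 1)) := by
      rw [mul_sub, ← map_add_eq_mul, neg_add_cancel, map_zero_eq_one]; ring
    rw [h, norm_neg, norm_mul, hψ, one_mul]

lemma norm_sub_eq_norm_sub_one (ψ : AddChar G ℂ) (hψ : ∀ γ, ‖ψ γ‖ = 1) (a b : G) :
    ‖ψ a - ψ b‖ = ‖ψ (a - b) - 1‖ := by
  have h : ψ a - ψ b = (ψ (a - b) - 1) * ψ b := by
    rw [sub_mul, ← map_add_eq_mul, sub_add_cancel, one_mul]
  rw [h, norm_mul, hψ, mul_one]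

end AddChar

theorem AddGroupSeminorm.exists_pos_mul_sq_le_of_mem_closure {G Θ : Type*} [AddGroup G]
    (ℓ : Θ → AddGroupSeminorm G) {D : Θ → ℝ} (hD : ∀ θ, 0 ≤ D θ) {S : Set G}
    (hS : ∀ γ ∈ S, ∃ c > 0, ∀ θ, c * ℓ θ γ ^ 2 ≤ D θ) {γ : G}
    (hγ : γ ∈ AddSubgroup.closure S) : ∃ c > 0, ∀ θ, c * ℓ θ γ ^ 2 ≤ D θ := by
  induction hγ using AddSubgroup.closure_induction with
  | mem γ hγ => exact hS γ hγ
  | zero => exact ⟨1, one_pos, fun θ => by simpa using hD θ⟩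
  | add a b _ _ ha hb =>
    obtain ⟨c, hc, ha⟩ := ha
    obtain ⟨c', hc', hb⟩ := hb
    refine ⟨min c c' / 4, by positivity, fun θ => ?_⟩
    have hm : 0 < min c c' := lt_min hc hc'
    calc min c c' / 4 * ℓ θ (a + b) ^ 2 ≤ min c c' / 4 * (ℓ θ a + ℓ θ b) ^ 2 := by
          gcongr; exact map_add_le_add (ℓ θ) a b
      _ ≤ (min c c' * ℓ θ a ^ 2 + min c c' * ℓ θ b ^ 2) / 2 := by
          nlinarith [sq_nonneg (ℓ θ a - ℓ θ b)]
      _ ≤ (c * ℓ θ a ^ 2 + c' * ℓ θ b ^ 2) / 2 := by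
          gcongr
          exacts [min_le_left c c', min_le_right c c']
      _ ≤ D θ := by linarith [ha θ, hb θ]
  | neg a _ ha => simpa only [map_neg_eq_map] using ha

section UnitMixture

variable {ι : Type*} {p : ι → ℝ} {z : ι → ℂ} {F : ℂ}

theorem exists_hasSum_mul_norm_sub_sq (hp : HasSum p 1) (hz : ∀ i, ‖z i‖ = 1)
    (hF : HasSum (fun i => p i * z i) F) :
    ∃ w : ℂ, HasSum (fun i => p i * ‖z i - w‖ ^ 2) (2 * (1 - ‖F‖)) := by
  -- `w` is the direction of `F`, so `‖F‖ = re (w̄ F)`, and `‖z - w‖² = 2 - 2 re (w̄ z)` for unit `z`.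
  set w := exp (arg F * I)
  have hw : ‖w‖ = 1 := norm_exp_ofReal_mul_I _
  have hwF : (conj w * F).re = ‖F‖ := by
    conv_lhs => rw [← norm_mul_exp_arg_mul_I F]
    rw [mul_left_comm, conj_mul', hw]
    simp
  have hre := hasSum_re (hF.mul_left (conj w))
  refine ⟨w, ?_⟩
  rw [show 2 * (1 - ‖F‖) = 2 * 1 - 2 * (conj w * F).re by rw [hwF]; ring]
  refine ((hp.mul_left 2).sub (hre.mul_left 2)).congr_fun fun i => ?_
  rw [Complex.sq_norm, normSq_sub, normSq_eq_norm_sq, normSq_eq_norm_sq, hz, hw, mul_left_comm, re_ofReal_mul, mul_comm (z i)]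
  ring

theorem norm_le_one_of_hasSum_mul (hp0 : ∀ i, 0 ≤ p i) (hp : HasSum p 1)
    (hz : ∀ i, ‖z i‖ = 1) (hF : HasSum (fun i => p i * z i) F) : ‖F‖ ≤ 1 := by
  obtain ⟨w, hw⟩ := exists_hasSum_mul_norm_sub_sq hp hz hF
  linarith [hw.nonneg fun i => mul_nonneg (hp0 i) (sq_nonneg _)]

theorem min_div_eight_mul_norm_sub_sq_le (hp0 : ∀ i, 0 ≤ p i) (hp : HasSum p 1)
    (hz : ∀ i, ‖z i‖ = 1) (hF : HasSum (fun i => p i * z i) F) (i j : ι) :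
    min (p i) (p j) / 8 * ‖z i - z j‖ ^ 2 ≤ 1 - ‖F‖ := by
  obtain ⟨w, hw⟩ := exists_hasSum_mul_norm_sub_sq hp hz hF
  have hle (k : ι) : p k * ‖z k - w‖ ^ 2 ≤ 2 * (1 - ‖F‖) :=
    le_hasSum hw k fun k' _ => mul_nonneg (hp0 k') (sq_nonneg _)
  have htri : ‖z i - z j‖ ≤ ‖z i - w‖ + ‖z j - w‖ := by
    simpa only [norm_sub_rev w] using norm_sub_le_norm_sub_add_norm_sub (z i) w (z j)
  have hm : 0 ≤ min (p i) (p j) := le_min (hp0 i) (hp0 j)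
  calc min (p i) (p j) / 8 * ‖z i - z j‖ ^ 2
      ≤ min (p i) (p j) / 8 * (‖z i - w‖ + ‖z j - w‖) ^ 2 := by gcongr
    _ ≤ (min (p i) (p j) * ‖z i - w‖ ^ 2 + min (p i) (p j) * ‖z j - w‖ ^ 2) / 4 := by
      nlinarith [sq_nonneg (‖z i - w‖ - ‖z j - w‖)]
    _ ≤ (p i * ‖z i - w‖ ^ 2 + p j * ‖z j - w‖ ^ 2) / 4 := by
      gcongr
      exacts [min_le_left _ _, min_le_right _ _]
    _ ≤ 1 - ‖F‖ := by linarith [hle i, hle j]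

end UnitMixture

theorem Complex.mul_abs_le_norm_exp_I_mul_ofReal_sub_one {x : ℝ} (hx : |x| ≤ Real.pi) :
    2 / Real.pi * |x| ≤ ‖exp (I * x) - 1‖ := by
  have h := Real.mul_abs_le_abs_sin (x := x / 2) (by rw [abs_div, abs_two]; linarith)
  rw [abs_div, abs_two] at h
  rw [norm_exp_I_mul_ofReal_sub_one, norm_mul, Real.norm_eq_abs, Real.norm_eq_abs, abs_two]
  linarith

variable {d : ℕ}

def phase (θ : Fin d → ℝ) : AddChar (Fin d → ℤ) ℂ where
  toFun β := exp (I * ((∑ i, (β i : ℝ) * θ i : ℝ) : ℂ))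
  map_zero_eq_one' := by simp
  map_add_eq_mul' β β' := by
    rw [← exp_add, ← mul_add, ← ofReal_add, ← Finset.sum_add_distrib]
    simp [add_mul]

theorem phase_apply (θ : Fin d → ℝ) (β : Fin d → ℤ) :
    phase θ β = exp (I * ((∑ i, (β i : ℝ) * θ i : ℝ) : ℂ)) := rfl

theorem norm_phase (θ : Fin d → ℝ) (β : Fin d → ℤ) : ‖phase θ β‖ = 1 := by
  rw [phase_apply, mul_comm, norm_exp_ofReal_mul_I]

theorem phase_single (θ : Fin d → ℝ) (i : Fin d) : phase θ (Pi.single i 1) = exp (I * θ i) := by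
  simp [phase_apply, Pi.single_apply]

theorem hasSum_ftrans {p : (Fin d → ℤ) → ℝ} (hp : Summable p) (θ : Fin d → ℝ) :
    HasSum (fun β => (p β : ℂ) * phase θ β) (ftrans p θ) :=
  (Summable.of_norm (by simpa [norm_phase] using hp.abs)).hasSum

section FourierTransform

variable {p : (Fin d → ℤ) → ℝ}

theorem norm_ftrans_le_one (hnn : ∀ β, 0 ≤ p β) (hsum : HasSum p 1) (θ : Fin d → ℝ) :
    ‖ftrans p θ‖ ≤ 1 :=
  norm_le_one_of_hasSum_mul hnn hsum (norm_phase θ) (hasSum_ftrans hsum.summable θ)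

theorem exists_pos_mul_norm_phase_sub_one_sq_le (hnn : ∀ β, 0 ≤ p β) (hsum : HasSum p 1)
    (hspan : AddSubgroup.closure
      {γ : Fin d → ℤ | ∃ β β', 0 < p β ∧ 0 < p β' ∧ γ = β - β'} = ⊤) (γ : Fin d → ℤ) :
    ∃ c > 0, ∀ θ, c * ‖phase θ γ - 1‖ ^ 2 ≤ 1 - ‖ftrans p θ‖ := by
  refine AddGroupSeminorm.exists_pos_mul_sq_le_of_mem_closure
    (fun θ => (phase θ).normSubOneSeminorm (norm_phase θ))
    (fun θ => sub_nonneg.2 (norm_ftrans_le_one hnn hsum θ)) ?_ (hspan ▸ AddSubgroup.mem_top γ)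
  rintro _ ⟨β, β', hβ, hβ', rfl⟩
  refine ⟨min (p β) (p β') / 8, by positivity, fun θ => ?_⟩
  have h := min_div_eight_mul_norm_sub_sq_le hnn hsum (norm_phase θ)
    (hasSum_ftrans hsum.summable θ) β β'
  rwa [AddChar.norm_sub_eq_norm_sub_one _ (norm_phase θ)] at h

theorem exists_pos_mul_sum_sq_le_one_sub_norm_ftrans (hnn : ∀ β, 0 ≤ p β) (hsum : HasSum p 1)
    (hspan : AddSubgroup.closure
      {γ : Fin d → ℤ | ∃ β β', 0 < p β ∧ 0 < p β' ∧ γ = β - β'} = ⊤) :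
    ∃ C > 0, ∀ θ : Fin d → ℝ, (∀ i, |θ i| ≤ Real.pi) →
      C * ∑ i, θ i ^ 2 ≤ 1 - ‖ftrans p θ‖ := by
  choose c hc hcθ using fun i : Fin d =>
    exists_pos_mul_norm_phase_sub_one_sq_le hnn hsum hspan (Pi.single i 1)
  set S := ∑ i, (c i)⁻¹
  have hS : 0 ≤ S := Finset.sum_nonneg fun i _ => (inv_pos.2 (hc i)).le
  refine ⟨(Real.pi ^ 2 / 4 * (S + 1))⁻¹, by positivity, fun θ hθ => ?_⟩
  set D := 1 - ‖ftrans p θ‖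
  have hD : 0 ≤ D := sub_nonneg.2 (norm_ftrans_le_one hnn hsum θ)
  have hcoord (i : Fin d) : θ i ^ 2 ≤ Real.pi ^ 2 / 4 * ((c i)⁻¹ * D) := by
    have hj := pow_le_pow_left₀ (by positivity)
      (Complex.mul_abs_le_norm_exp_I_mul_ofReal_sub_one (hθ i)) 2
    have hi : ‖phase θ (Pi.single i 1) - 1‖ ^ 2 ≤ (c i)⁻¹ * D :=
      (le_inv_mul_iff₀ (hc i)).2 (hcθ i θ)
    rw [phase_single] at hi
    calc θ i ^ 2 = Real.pi ^ 2 / 4 * (2 / Real.pi * |θ i|) ^ 2 := by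
          rw [mul_pow, div_pow, sq_abs]; field_simp; ring
      _ ≤ Real.pi ^ 2 / 4 * ((c i)⁻¹ * D) :=
          mul_le_mul_of_nonneg_left (hj.trans hi) (by positivity)
  rw [inv_mul_le_iff₀ (by positivity)]
  calc ∑ i, θ i ^ 2 ≤ ∑ i, Real.pi ^ 2 / 4 * ((c i)⁻¹ * D) :=
        Finset.sum_le_sum fun i _ => hcoord i
    _ = Real.pi ^ 2 / 4 * S * D := by rw [← Finset.mul_sum, ← Finset.sum_mul]; ring
    _ ≤ Real.pi ^ 2 / 4 * (S + 1) * D := by gcongr; linarith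

end FourierTransform

theorem Real.rpow_le_mul_of_rpow_neg_le_sqrt {n t ε : ℝ} (hn : 0 < n) (ht : 0 ≤ t)
    (h : n ^ (-(1 - ε) / 2) ≤ √t) : n ^ ε ≤ n * t := by
  rw [Real.le_sqrt (by positivity) ht, ← Real.rpow_natCast, ← Real.rpow_mul hn.le,
    show -(1 - ε) / 2 * ((2 : ℕ) : ℝ) = -(1 - ε) by push_cast; ring] at h
  calc n ^ ε = n ^ (1 + -(1 - ε)) := by ring_nf
    _ = n * n ^ (-(1 - ε)) := by rw [Real.rpow_add hn, Real.rpow_one]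
    _ ≤ n * t := mul_le_mul_of_nonneg_left h hn.le

theorem ft_power_decay_general (d : ℕ) (p : (Fin d → ℤ) → ℝ)
    (hnn : ∀ β, 0 ≤ p β) (hsum : HasSum p 1)
    (hspan : AddSubgroup.closure
      {γ : Fin d → ℤ | ∃ β β', 0 < p β ∧ 0 < p β' ∧ γ = β - β'} = ⊤)
    (ε : ℝ) :
    ∃ κ : ℝ, 0 < κ ∧ ∃ N : ℕ, ∀ n : ℕ, N ≤ n → ∀ θ : Fin d → ℝ,
      (∀ i, θ i ∈ Set.Ioc (-Real.pi) Real.pi) →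
      (n : ℝ) ^ (-(1 - ε) / 2) ≤ Real.sqrt (∑ i, (θ i) ^ 2) →
      ‖ftrans p θ‖ ^ n ≤ Real.exp (-κ * (n : ℝ) ^ ε) := by
  obtain ⟨C, hC, hCθ⟩ := exists_pos_mul_sum_sq_le_one_sub_norm_ftrans hnn hsum hspan
  refine ⟨C, hC, 1, fun n hn θ hθ hrad => ?_⟩
  have hn' : (0 : ℝ) < n := by exact_mod_cast hn
  have ht : 0 ≤ ∑ i, θ i ^ 2 := Finset.sum_nonneg fun i _ => sq_nonneg _
  have hbound : ‖ftrans p θ‖ ≤ Real.exp (-(C * ∑ i, θ i ^ 2)) :=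
    (le_sub_comm.1 (hCθ θ fun i => abs_le.2 ⟨(hθ i).1.le, (hθ i).2⟩)).trans
      (Real.one_sub_le_exp_neg _)
  calc ‖ftrans p θ‖ ^ n ≤ Real.exp (-(C * ∑ i, θ i ^ 2)) ^ n :=
        pow_le_pow_left₀ (norm_nonneg _) hbound n
    _ = Real.exp (-(C * (n * ∑ i, θ i ^ 2))) := by rw [← Real.exp_nat_mul]; ring_nf
    _ ≤ Real.exp (-C * (n : ℝ) ^ ε) := by
        have := Real.rpow_le_mul_of_rpow_neg_le_sqrt hn' ht hrad
        exact Real.exp_le_exp.2 (by nlinarith)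

/-- Lemma 5.4: there exists `κ > 0` such that, for `n` large enough,
`max_{θ ∈ 𝕋^d \ ℬ_n} |p̃(θ)|ⁿ ≤ e^{−κ nᵉ}`, where `ℬ_n` is the ball of center `0` and
radius `n^{−(1−ε)/2}` in `𝕋^d` (identified with `(−π,π]^d`). -/
theorem ft_power_decay (d : ℕ) (hd : 1 ≤ d) (p : (Fin d → ℤ) → ℝ)
    (hnn : ∀ β, 0 ≤ p β) (hsum : HasSum p 1)
    (hmom : Summable fun β : Fin d → ℤ => (∑ i, ((β i : ℝ)) ^ 2) * p β)
    (hspan : AddSubgroup.closure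
      {γ : Fin d → ℤ | ∃ β β', 0 < p β ∧ 0 < p β' ∧ γ = β - β'} = ⊤)
    (ε : ℝ) (hε : ε ∈ Set.Ioo (0 : ℝ) 1) :
    ∃ κ : ℝ, 0 < κ ∧ ∃ N : ℕ, ∀ n : ℕ, N ≤ n → ∀ θ : Fin d → ℝ,
      (∀ i, θ i ∈ Set.Ioc (-Real.pi) Real.pi) →
      (n : ℝ) ^ (-(1 - ε) / 2) ≤ Real.sqrt (∑ i, (θ i) ^ 2) →
      ‖ftrans p θ‖ ^ n ≤ Real.exp (-κ * (n : ℝ) ^ ε) :=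
  ft_power_decay_general d p hnn hsum hspan ε
end
end
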